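/- Let n ≥ 1, let λ ∈ ℝ, and let ψ : ℝ → ℂ be a function that is smooth on (−π, π), even, with ψ(0) = 1, and satisfies the radial eigenfunction equation of the spherical Laplacian: ψ″(r) + 2n·(cos r/sin r)·ψ′(r) = (λ² + n²)·ψ(r) for all r with 0 < |r| < π. Then (D̃ψ)(r) = cosh(λr) for all r ∈ (−π, π), where D̃ = (1/(2n−1)!!)·∏_{k=1}^{n} (sin r·(d/dr) + (2k−1)·cos r), composed with smaller values of k to the left. -/

import Mathlib

/-!
The factor `Ã_{m+1}` intertwines the radial equations of parameters `m + 1` and `m`: if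
`ψ'' + 2(m+1) cot r ψ' = (λ² + (m+1)²) ψ`, then `(Ã_{m+1} ψ)' = (λ² + m²) sin r · ψ`, and from
this `Ã_{m+1} ψ` solves the equation of parameter `m`. It also preserves evenness and smoothness, and
multiplies the value at `0` by `2m + 1`. After `n` steps one reaches an even solution of
`φ'' = λ² φ` with `φ(0) = (2n-1)!! ψ(0)`, which by uniqueness for this linear ODE is
`φ(0) cosh (λ r)`.
-/

/-- The factor `Ã_k` given by `(Ã_k g)(r) = sin r · g'(r) + (2k-1) cos r · g(r)`. -/
noncomputable def Asph (k : ℕ) (g : ℝ → ℂ) : ℝ → ℂ :=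
  fun r => (Real.sin r : ℂ) * deriv g r + (2 * (k : ℂ) - 1) * (Real.cos r : ℂ) * g r

/-- `AsphChain n f = Ã₁(Ã₂(⋯(Ãₙ f)⋯))`, the composition with smaller indices to
the left. -/
noncomputable def AsphChain : ℕ → (ℝ → ℂ) → (ℝ → ℂ)
  | 0, f => f
  | n + 1, f => AsphChain n (Asph (n + 1) f)

/-- The shift operator `D̃ = (1/(2n-1)!!) ∏_{k=1}^n (sin r d/dr + (2k-1) cos r)`. -/
noncomputable def Dsph (n : ℕ) (f : ℝ → ℂ) : ℝ → ℂ :=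
  fun r => ((Nat.doubleFactorial (2 * n - 1) : ℂ))⁻¹ * AsphChain n f r

open Set Real Filter Topology

theorem IsOpen.eqOn_zero_of_hasDerivAt_const_mul {s : Set ℝ} (hs : IsOpen s)
    (hs' : IsPreconnected s) {u : ℝ → ℂ} {c : ℂ} {a : ℝ} (ha : a ∈ s)
    (hu : ∀ x ∈ s, HasDerivAt u (c * u x) x) (hua : u a = 0) : ∀ x ∈ s, u x = 0 := by
  set w : ℝ → ℂ := fun x => Complex.exp (-c * x) * u x
  have hw : ∀ x ∈ s, HasDerivAt w 0 x := fun x hx => by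
    refine ((((hasDerivAt_id x).ofReal_comp).const_mul (-c)).cexp.mul (hu x hx)).congr_deriv ?_
    simp only [id, Complex.ofReal_one]
    ring
  intro x hx
  have hconst : w x = w a := hs.is_const_of_deriv_eq_zero hs'
    (fun y hy => (hw y hy).differentiableAt.differentiableWithinAt) (fun y hy => (hw y hy).deriv)
    hx ha
  simpa [w, hua, Complex.exp_ne_zero] using hconst

/-- `u'' - c²u = (d/dx + c)(d/dx - c) u` reduces this to the first-order case twice. -/
theorem IsOpen.eqOn_zero_of_hasDerivAt_sq_mul {s : Set ℝ} (hs : IsOpen s)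
    (hs' : IsPreconnected s) {u u' : ℝ → ℂ} {c : ℂ} {a : ℝ} (ha : a ∈ s)
    (hu : ∀ x ∈ s, HasDerivAt u (u' x) x) (hu' : ∀ x ∈ s, HasDerivAt u' (c ^ 2 * u x) x)
    (hua : u a = 0) (hua' : u' a = 0) : ∀ x ∈ s, u x = 0 := by
  have hfirst : ∀ x ∈ s, u' x - c * u x = 0 :=
    hs.eqOn_zero_of_hasDerivAt_const_mul hs' (u := fun x => u' x - c * u x) (c := -c) ha
      (fun x hx => ((hu' x hx).sub ((hu x hx).const_mul c)).congr_deriv (by ring))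
      (by simp [hua, hua'])
  exact hs.eqOn_zero_of_hasDerivAt_const_mul hs' ha
    (fun x hx => by simpa [sub_eq_zero.mp (hfirst x hx)] using hu x hx) hua

theorem hasDerivAt_cosh_const_mul (c : ℂ) (x : ℝ) :
    HasDerivAt (fun t : ℝ => Complex.cosh (c * t)) (c * Complex.sinh (c * x)) x := by
  simpa [Function.comp_def, mul_comm] using
    (Complex.hasDerivAt_cosh _).comp x (((hasDerivAt_id x).ofReal_comp).const_mul c)

theorem hasDerivAt_sinh_const_mul (c : ℂ) (x : ℝ) :
    HasDerivAt (fun t : ℝ => Complex.sinh (c * t)) (c * Complex.cosh (c * x)) x := by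
  simpa [Function.comp_def, mul_comm] using
    (Complex.hasDerivAt_sinh _).comp x (((hasDerivAt_id x).ofReal_comp).const_mul c)

theorem asph_apply_zero (k : ℕ) (g : ℝ → ℂ) : Asph k g 0 = (2 * k - 1) * g 0 := by
  simp [Asph]

theorem ofReal_cos_div_sin_mul_sin {x : ℝ} (h1 : 0 < |x|) (h2 : |x| < π) :
    (cos x : ℂ) / sin x * sin x = cos x := by
  have hx := abs_lt.mp h2
  refine div_mul_cancel₀ _ (Complex.ofReal_ne_zero.mpr ?_)
  exact (sin_eq_zero_iff_of_lt_of_lt hx.1 hx.2).not.mpr (abs_pos.mp h1)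

/-- `ψ'' + 2m cot r ψ' = (λ² + m²) ψ` is the radial part of the eigenfunction equation of the
Laplacian of `S^{2m+1}`. -/
structure IsRadialEigenfunction (m : ℕ) (lam : ℝ) (ψ : ℝ → ℂ) : Prop where
  contDiffOn : ContDiffOn ℝ (⊤ : ℕ∞) ψ (Ioo (-π) π)
  even : Function.Even ψ
  ode : ∀ r : ℝ, 0 < |r| → |r| < π →
    deriv (deriv ψ) r + 2 * (m : ℂ) * ((cos r : ℂ) / (sin r : ℂ)) * deriv ψ r
      = ((lam : ℂ) ^ 2 + (m : ℂ) ^ 2) * ψ r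

namespace IsRadialEigenfunction

variable {m : ℕ} {lam : ℝ} {ψ : ℝ → ℂ}

theorem contDiffOn_deriv (h : IsRadialEigenfunction m lam ψ) :
    ContDiffOn ℝ (⊤ : ℕ∞) (deriv ψ) (Ioo (-π) π) :=
  h.contDiffOn.deriv_of_isOpen isOpen_Ioo (by simp)

theorem hasDerivAt (h : IsRadialEigenfunction m lam ψ) {x : ℝ} (hx : x ∈ Ioo (-π) π) :
    HasDerivAt ψ (deriv ψ x) x :=
  ((h.contDiffOn.differentiableOn (by simp)).differentiableAt (isOpen_Ioo.mem_nhds hx)).hasDerivAt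

theorem hasDerivAt_deriv (h : IsRadialEigenfunction m lam ψ) {x : ℝ} (hx : x ∈ Ioo (-π) π) :
    HasDerivAt (deriv ψ) (deriv (deriv ψ) x) x :=
  ((h.contDiffOn_deriv.differentiableOn (by simp)).differentiableAt
    (isOpen_Ioo.mem_nhds hx)).hasDerivAt

theorem deriv_neg (h : IsRadialEigenfunction m lam ψ) (x : ℝ) : deriv ψ (-x) = -deriv ψ x := by
  have := deriv_comp_neg (f := ψ) (x := x)
  rw [show (fun x => ψ (-x)) = ψ from funext h.even] at this
  rw [this, neg_neg]

theorem hasDerivAt_asph (h : IsRadialEigenfunction (m + 1) lam ψ) {x : ℝ} (h1 : 0 < |x|)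
    (h2 : |x| < π) :
    HasDerivAt (Asph (m + 1) ψ) (((lam : ℂ) ^ 2 + (m : ℂ) ^ 2) * sin x * ψ x) x := by
  have hx : x ∈ Ioo (-π) π := abs_lt.mp h2
  have hcot := ofReal_cos_div_sin_mul_sin h1 h2
  have hode := h.ode x h1 h2
  simp only [Nat.cast_add, Nat.cast_one] at hode
  refine (((hasDerivAt_sin x).ofReal_comp.mul (h.hasDerivAt_deriv hx)).add
    (((hasDerivAt_cos x).ofReal_comp.const_mul _).mul (h.hasDerivAt hx))).congr_deriv ?_
  simp only [Nat.cast_add, Nat.cast_one, Complex.ofReal_neg]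
  linear_combination (sin x : ℂ) * hode - 2 * ((m : ℂ) + 1) * deriv ψ x * hcot

theorem asph (h : IsRadialEigenfunction (m + 1) lam ψ) :
    IsRadialEigenfunction m lam (Asph (m + 1) ψ) where
  contDiffOn :=
    ((Complex.ofRealCLM.contDiff.comp contDiff_sin).contDiffOn.mul h.contDiffOn_deriv).add
      ((contDiffOn_const.mul (Complex.ofRealCLM.contDiff.comp contDiff_cos).contDiffOn).mul
        h.contDiffOn)
  even x := by
    simp only [Asph, sin_neg, cos_neg, h.deriv_neg, h.even x, Complex.ofReal_neg]
    ring
  ode x h1 h2 := by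
    have hx : x ∈ Ioo (-π) π := abs_lt.mp h2
    have hderiv : deriv (Asph (m + 1) ψ) =ᶠ[𝓝 x]
        fun y => ((lam : ℂ) ^ 2 + (m : ℂ) ^ 2) * sin y * ψ y := by
      filter_upwards [(isOpen_Ioo.preimage continuous_abs).mem_nhds
        (show |x| ∈ Ioo 0 π from ⟨h1, h2⟩)] with y hy using (h.hasDerivAt_asph hy.1 hy.2).deriv
    have hcot := ofReal_cos_div_sin_mul_sin h1 h2
    have hderiv2 : HasDerivAt (fun y => ((lam : ℂ) ^ 2 + (m : ℂ) ^ 2) * sin y * ψ y)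
        (((lam : ℂ) ^ 2 + (m : ℂ) ^ 2) * (cos x * ψ x + sin x * deriv ψ x)) x :=
      (((hasDerivAt_sin x).ofReal_comp.const_mul _).mul (h.hasDerivAt hx)).congr_deriv (by ring)
    rw [hderiv.deriv_eq, hderiv.eq_of_nhds, hderiv2.deriv]
    simp only [Asph, Nat.cast_add, Nat.cast_one]
    linear_combination 2 * (m : ℂ) * ((lam : ℂ) ^ 2 + (m : ℂ) ^ 2) * ψ x * hcot

theorem eq_mul_cosh (h : IsRadialEigenfunction 0 lam ψ) {r : ℝ} (hr : r ∈ Ioo (-π) π) :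
    ψ r = ψ 0 * Complex.cosh (lam * r) := by
  have h0 : (0 : ℝ) ∈ Ioo (-π) π := ⟨neg_neg_iff_pos.mpr pi_pos, pi_pos⟩
  have hode : ∀ x ∈ Ioo (-π) π, deriv (deriv ψ) x = (lam : ℂ) ^ 2 * ψ x := by
    intro x hx
    rcases eq_or_ne x 0 with rfl | hx0
    -- at `0` the equation follows by continuity of `ψ''` from the punctured interval
    · have hcont : ContinuousAt (fun y => deriv (deriv ψ) y - (lam : ℂ) ^ 2 * ψ y) 0 :=
        (((h.contDiffOn_deriv.continuousOn_deriv_of_isOpen isOpen_Ioo (by simp)).sub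
          (continuousOn_const.mul h.contDiffOn.continuousOn)).continuousAt
          (isOpen_Ioo.mem_nhds h0))
      have hpunct :
          (fun y => deriv (deriv ψ) y - (lam : ℂ) ^ 2 * ψ y) =ᶠ[𝓝[≠] 0] fun _ => 0 := by
        filter_upwards [nhdsWithin_le_nhds (Ioo_mem_nhds (neg_neg_iff_pos.mpr pi_pos) pi_pos),
          self_mem_nhdsWithin] with y hy hy0
        simpa [sub_eq_zero] using h.ode y (abs_pos.mpr hy0) (abs_lt.mpr hy)
      exact sub_eq_zero.mp (tendsto_nhds_unique (hcont.tendsto.mono_left nhdsWithin_le_nhds)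
        (tendsto_const_nhds.congr' hpunct.symm))
    · simpa using h.ode x (abs_pos.mpr hx0) (abs_lt.mpr hx)
  have hψ'0 : deriv ψ 0 = 0 := self_eq_neg.mp (by simpa using h.deriv_neg 0)
  have key := isOpen_Ioo.eqOn_zero_of_hasDerivAt_sq_mul isPreconnected_Ioo h0
    (u := fun x => ψ x - ψ 0 * Complex.cosh (lam * x))
    (u' := fun x => deriv ψ x - ψ 0 * (lam * Complex.sinh (lam * x))) (c := lam)
    (fun x hx => (h.hasDerivAt hx).sub ((hasDerivAt_cosh_const_mul _ x).const_mul _))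
    (fun x hx => ((h.hasDerivAt_deriv hx).sub
      ((hasDerivAt_sinh_const_mul _ x).const_mul _ |>.const_mul _)).congr_deriv
        (by rw [hode x hx]; ring))
    (by simp) (by simp [hψ'0]) r hr
  exact sub_eq_zero.mp key

theorem asphChain_eq (h : IsRadialEigenfunction m lam ψ) {r : ℝ} (hr : r ∈ Ioo (-π) π) :
    AsphChain m ψ r = (2 * m - 1).doubleFactorial * ψ 0 * Complex.cosh (lam * r) := by
  induction m generalizing ψ with
  | zero => simpa [AsphChain] using h.eq_mul_cosh hr
  | succ m ih =>
    rw [AsphChain, ih h.asph, asph_apply_zero, show 2 * (m + 1) - 1 = 2 * m + 1 by omega,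
      Nat.doubleFactorial_add_one]
    push_cast
    ring

end IsRadialEigenfunction

theorem stmt_11_general (n : ℕ) (lam : ℝ) (ψ : ℝ → ℂ)
    (hψ : ContDiffOn ℝ (⊤ : ℕ∞) ψ (Set.Ioo (-Real.pi) Real.pi))
    (heven : ∀ r : ℝ, ψ (-r) = ψ r) (h0 : ψ 0 = 1)
    (hode : ∀ r : ℝ, 0 < |r| → |r| < Real.pi →
      deriv (deriv ψ) r + 2 * (n : ℂ) * ((Real.cos r : ℂ) / (Real.sin r : ℂ)) * deriv ψ r
        = (((lam : ℂ)) ^ 2 + (n : ℂ) ^ 2) * ψ r) :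
    ∀ r ∈ Set.Ioo (-Real.pi) Real.pi, Dsph n ψ r = (Real.cosh (lam * r) : ℂ) := by
  intro r hr
  have hdf : ((2 * n - 1).doubleFactorial : ℂ) ≠ 0 := by
    exact_mod_cast (Nat.doubleFactorial_pos _).ne'
  rw [Dsph, IsRadialEigenfunction.asphChain_eq ⟨hψ, heven, hode⟩ hr, h0, mul_one,
    inv_mul_cancel_left₀ hdf, Complex.ofReal_cosh, Complex.ofReal_mul]

/-- `D̃` maps the analytically continued spherical function `φ_λ(ir)` of
`H^{2n+1}` to `cosh (λ r)` on `(-π, π)`. -/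
theorem stmt_11 (n : ℕ) (hn : 1 ≤ n) (lam : ℝ) (ψ : ℝ → ℂ)
    (hψ : ContDiffOn ℝ (⊤ : ℕ∞) ψ (Set.Ioo (-Real.pi) Real.pi))
    (heven : ∀ r : ℝ, ψ (-r) = ψ r) (h0 : ψ 0 = 1)
    (hode : ∀ r : ℝ, 0 < |r| → |r| < Real.pi →
      deriv (deriv ψ) r + 2 * (n : ℂ) * ((Real.cos r : ℂ) / (Real.sin r : ℂ)) * deriv ψ r
        = (((lam : ℂ)) ^ 2 + (n : ℂ) ^ 2) * ψ r) :
    ∀ r ∈ Set.Ioo (-Real.pi) Real.pi, Dsph n ψ r = (Real.cosh (lam * r) : ℂ) :=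
  stmt_11_general n lam ψ hψ heven h0 hode
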